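/- Let p ≥ 1, q ≥ 0, N = p + q, and let (t_i, a_i)_{i=1}^r be a good parameter satisfying the nonvanishing condition, such that every rational occurs at most twice in the multiset ν. If some rational occurs both in ν_{<j} and in ν_{>j}, then every element of ν_j belongs to ν_{>j} and q_j = 0; moreover every rational occurring in both ν_{<j} and ν_{>j} is strictly greater than max ν_j. -/

import Mathlib

open Finset

/-- The multiset `P(λ) = {λ_i − (N−1)/2 + (p−i) : 1 ≤ i ≤ p}` of rationals,
for `N = p + q` and a weight `λ : ℕ → ℤ` (1-based indexing). -/
def Pms (p q : ℕ) (lam : ℕ → ℤ) : Multiset ℚ :=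
  (Finset.Icc 1 p).val.map
    (fun i => (lam i : ℚ) - ((p : ℚ) + (q : ℚ) - 1) / 2 + ((p : ℚ) - (i : ℚ)))

/-- The multiset `Q(λ) = {λ_{p+i} + (N−1)/2 − (i−1) : 1 ≤ i ≤ q}`. -/
def Qms (p q : ℕ) (lam : ℕ → ℤ) : Multiset ℚ :=
  (Finset.Icc 1 q).val.map
    (fun i => (lam (p + i) : ℚ) + ((p : ℚ) + (q : ℚ) - 1) / 2 - ((i : ℚ) - 1))

/-- Dominance: `λ_1 ≥ … ≥ λ_p` and `λ_{p+1} ≥ … ≥ λ_{p+q}`. -/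
def Dominant (p q : ℕ) (lam : ℕ → ℤ) : Prop :=
  (∀ i, 1 ≤ i → i < p → lam (i + 1) ≤ lam i) ∧
  (∀ i, p + 1 ≤ i → i < p + q → lam (i + 1) ≤ lam i)

/-- `p' = #{i : 1 ≤ i ≤ p, λ_i = λ_p}`. -/
def pPrime (p : ℕ) (lam : ℕ → ℤ) : ℕ :=
  ((Finset.Icc 1 p).filter (fun i => lam i = lam p)).card

/-- `q' = #{i : p+1 ≤ i ≤ p+q, λ_i = λ_{p+1}}`. -/
def qPrime (p q : ℕ) (lam : ℕ → ℤ) : ℕ :=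
  ((Finset.Icc (p + 1) (p + q)).filter (fun i => lam i = lam (p + 1))).card

/-- The segment `P' = {λ_p − (N−1)/2 + k : 0 ≤ k ≤ p'−1}`. -/
def Pseg (p q : ℕ) (lam : ℕ → ℤ) : Finset ℚ :=
  (Finset.range (pPrime p lam)).image
    (fun k : ℕ => (lam p : ℚ) - ((p : ℚ) + (q : ℚ) - 1) / 2 + (k : ℚ))

/-- The segment `Q' = {λ_{p+1} + (N−1)/2 − k : 0 ≤ k ≤ q'−1}`. -/
def Qseg (p q : ℕ) (lam : ℕ → ℤ) : Finset ℚ :=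
  (Finset.range (qPrime p q lam)).image
    (fun k : ℕ => (lam (p + 1) : ℚ) + ((p : ℚ) + (q : ℚ) - 1) / 2 - (k : ℚ))

/-- `I = P' ∩ Q'`. -/
def Iseg (p q : ℕ) (lam : ℕ → ℤ) : Finset ℚ := Pseg p q lam ∩ Qseg p q lam

/-- A good parameter `(t_1,a_1),…,(t_r,a_r)` for `U(p,q)` (1-based indexing). -/
structure GoodParam (p q r : ℕ) (t : ℕ → ℤ) (a : ℕ → ℕ) : Prop where
  hr : 1 ≤ r
  hpos : ∀ i ∈ Finset.Icc 1 r, 0 < a i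
  hsum : ∑ i ∈ Finset.Icc 1 r, a i = p + q
  heven : ∀ i ∈ Finset.Icc 1 r, Even (t i + (a i : ℤ) + (p : ℤ) + (q : ℤ))
  hdec : ∀ i, 1 ≤ i → i < r → t (i + 1) ≤ t i
  hadec : ∀ i, 1 ≤ i → i < r → t i = t (i + 1) → a (i + 1) ≤ a i

/-- The segment `ν_i = {(t_i − a_i + 1)/2 + k : 0 ≤ k ≤ a_i − 1}` as a multiset of rationals. -/
def nu (t : ℕ → ℤ) (a : ℕ → ℕ) (i : ℕ) : Multiset ℚ :=
  (Multiset.range (a i)).map (fun k => ((t i : ℚ) - (a i : ℚ) + 1) / 2 + (k : ℚ))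

/-- `ν_{<j} = ν_1 ⊔ … ⊔ ν_{j−1}`. -/
def nuLt (t : ℕ → ℤ) (a : ℕ → ℕ) (j : ℕ) : Multiset ℚ :=
  ∑ k ∈ Finset.Icc 1 (j - 1), nu t a k

/-- `ν_{>j} = ν_{j+1} ⊔ … ⊔ ν_r`. -/
def nuGt (t : ℕ → ℤ) (a : ℕ → ℕ) (r j : ℕ) : Multiset ℚ :=
  ∑ k ∈ Finset.Icc (j + 1) r, nu t a k

/-- `ν = ν_1 ⊔ … ⊔ ν_r`. -/
def nuAll (t : ℕ → ℤ) (a : ℕ → ℕ) (r : ℕ) : Multiset ℚ :=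
  ∑ k ∈ Finset.Icc 1 r, nu t a k

/-- `j` is the least index with `a_1 + … + a_j ≥ p`. -/
structure LeastJ (p r : ℕ) (a : ℕ → ℕ) (j : ℕ) : Prop where
  h1 : 1 ≤ j
  hle : j ≤ r
  hge : p ≤ ∑ ℓ ∈ Finset.Icc 1 j, a ℓ
  hmin : ∀ i, i < j → ∑ ℓ ∈ Finset.Icc 1 i, a ℓ < p

/-- `p_j = p − (a_1 + … + a_{j−1})`. -/
def pj (p : ℕ) (a : ℕ → ℕ) (j : ℕ) : ℕ := p - ∑ ℓ ∈ Finset.Icc 1 (j - 1), a ℓ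

/-- `q_j = q − (a_{j+1} + … + a_r)`. -/
def qj (q r : ℕ) (a : ℕ → ℕ) (j : ℕ) : ℕ := q - ∑ ℓ ∈ Finset.Icc (j + 1) r, a ℓ

/-- The nonvanishing condition: `ν_{<j}` and `ν_{>j}` are multiplicity free,
`#(ν_j ∩ ν_{<j}) ≤ q_j` and `#(ν_j ∩ ν_{>j}) ≤ p_j`. -/
def NonVanishing (p q r : ℕ) (t : ℕ → ℤ) (a : ℕ → ℕ) (j : ℕ) : Prop :=
  (nuLt t a j).Nodup ∧ (nuGt t a r j).Nodup ∧
  Multiset.card ((nu t a j).filter (fun x => x ∈ nuLt t a j)) ≤ qj q r a j ∧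
  Multiset.card ((nu t a j).filter (fun x => x ∈ nuGt t a r j)) ≤ pj p a j

/-!
Since `t` is non-increasing and all `t_i + a_i` have the same parity, the segments `ν_i`
behave like intervals of one parity class. Let `x` lie in `ν_u` (`u < j`) and in `ν_v` (`v > j`).
It cannot lie in `ν_j`, for then it would occur three times in `ν`. It cannot lie below `ν_j`
either: then `ν_j ⊆ ν_u ⊆ ν_{<j}`, so the nonvanishing condition gives `a_j ≤ q_j`, which the
minimality of `j` forbids. Hence `x` lies above `ν_j`, so `ν_j ⊆ ν_v ⊆ ν_{>j}`, and now the
nonvanishing condition gives `a_j ≤ p_j`, i.e. `a_1 + … + a_j = p` and `q_j = 0`.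
-/

section

variable {p q r : ℕ} {t : ℕ → ℤ} {a : ℕ → ℕ}

lemma mem_nu_iff {i : ℕ} {x : ℚ} :
    x ∈ nu t a i ↔ ∃ m : ℤ, 2 * x = m ∧ t i - a i < m ∧ m < t i + a i ∧
      m ≡ t i + a i + 1 [ZMOD 2] := by
  simp only [nu, Multiset.pure_def, Multiset.bind_def, Multiset.bind_singleton, Multiset.map_map,
    Function.comp_apply, Multiset.mem_map, Multiset.mem_range, Int.ModEq]
  constructor
  · rintro ⟨k, hk, rfl⟩
    exact ⟨t i - a i + 1 + 2 * k, by push_cast; ring, by omega, by omega, by omega⟩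
  · rintro ⟨m, hxm, hlo, hhi, hpar⟩
    refine ⟨((m - (t i - a i + 1)) / 2).toNat, by omega, ?_⟩
    have hk : ((((m - (t i - a i + 1)) / 2).toNat : ℤ) : ℚ) * 2 = m - (t i - a i + 1) := by
      exact_mod_cast (show (((m - (t i - a i + 1)) / 2).toNat : ℤ) * 2 = m - (t i - a i + 1) by
        omega)
    push_cast at hk
    linarith

lemma two_mul_bounds_of_mem_nu {i : ℕ} {x : ℚ} (hx : x ∈ nu t a i) :
    (t i : ℚ) - a i < 2 * x ∧ 2 * x < t i + a i := by
  obtain ⟨m, hxm, hlo, hhi, -⟩ := mem_nu_iff.mp hx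
  rw [hxm]
  exact ⟨by exact_mod_cast hlo, by exact_mod_cast hhi⟩

lemma mem_nu_of_mem_nu {i j : ℕ} {x : ℚ} (hpar : t i + a i ≡ t j + a j [ZMOD 2])
    (hx : x ∈ nu t a i) (hlo : (t j : ℚ) - a j < 2 * x) (hhi : 2 * x < t j + a j) :
    x ∈ nu t a j := by
  obtain ⟨m, hxm, -, -, hm⟩ := mem_nu_iff.mp hx
  rw [hxm] at hlo hhi
  exact mem_nu_iff.mpr ⟨m, hxm, by exact_mod_cast hlo, by exact_mod_cast hhi,
    hm.trans (hpar.add_right 1)⟩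

lemma nu_subset_of_mem_below {j u : ℕ} {x : ℚ} (hpar : t j + a j ≡ t u + a u [ZMOD 2])
    (ht : t j ≤ t u) (hx : x ∈ nu t a u) (hbelow : 2 * x ≤ t j - a j) :
    nu t a j ⊆ nu t a u := by
  have htQ : (t j : ℚ) ≤ t u := by exact_mod_cast ht
  obtain ⟨hxlo, -⟩ := two_mul_bounds_of_mem_nu hx
  intro y hy
  obtain ⟨hylo, hyhi⟩ := two_mul_bounds_of_mem_nu hy
  exact mem_nu_of_mem_nu hpar hy (by linarith) (by linarith)

lemma nu_subset_of_mem_above {j v : ℕ} {x : ℚ} (hpar : t j + a j ≡ t v + a v [ZMOD 2])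
    (ht : t v ≤ t j) (hx : x ∈ nu t a v) (habove : (t j : ℚ) + a j ≤ 2 * x) :
    nu t a j ⊆ nu t a v := by
  have htQ : (t v : ℚ) ≤ t j := by exact_mod_cast ht
  obtain ⟨-, hxhi⟩ := two_mul_bounds_of_mem_nu hx
  intro y hy
  obtain ⟨hylo, hyhi⟩ := two_mul_bounds_of_mem_nu hy
  exact mem_nu_of_mem_nu hpar hy (by linarith) (by linarith)

lemma card_nu {i : ℕ} : Multiset.card (nu t a i) = a i := by
  simp [nu]

lemma mem_nuLt {j : ℕ} {x : ℚ} : x ∈ nuLt t a j ↔ ∃ u ∈ Icc 1 (j - 1), x ∈ nu t a u :=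
  Multiset.mem_sum

lemma mem_nuGt {j : ℕ} {x : ℚ} : x ∈ nuGt t a r j ↔ ∃ v ∈ Icc (j + 1) r, x ∈ nu t a v :=
  Multiset.mem_sum

lemma sum_Icc_one_eq_add_add {M : Type*} [AddCommMonoid M] (f : ℕ → M) {j : ℕ}
    (h1 : 1 ≤ j) (h2 : j ≤ r) :
    ∑ i ∈ Icc 1 r, f i = ∑ i ∈ Icc 1 (j - 1), f i + f j + ∑ i ∈ Icc (j + 1) r, f i := by
  obtain ⟨k, rfl⟩ : ∃ k, j = k + 1 := ⟨j - 1, by omega⟩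
  rw [Nat.add_sub_cancel, ← sum_Icc_succ_top (by omega)]
  simpa only [← Icc_add_one_left_eq_Ioc, zero_add] using
    (sum_Ioc_consecutive f (Nat.zero_le (k + 1)) h2).symm

lemma nuAll_eq_add {j : ℕ} (h1 : 1 ≤ j) (h2 : j ≤ r) :
    nuAll t a r = nuLt t a j + nu t a j + nuGt t a r j :=
  sum_Icc_one_eq_add_add (nu t a) h1 h2

namespace GoodParam

lemma t_antitone (hgp : GoodParam p q r t a) {u v : ℕ} (hu : 1 ≤ u) (huv : u ≤ v)
    (hv : v ≤ r) : t v ≤ t u := by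
  induction v, huv using Nat.le_induction with
  | base => exact le_rfl
  | succ n hun ih => exact (hgp.hdec n (by omega) (by omega)).trans (ih (by omega))

lemma modEq_two (hgp : GoodParam p q r t a) {u v : ℕ} (hu : u ∈ Icc 1 r) (hv : v ∈ Icc 1 r) :
    t u + a u ≡ t v + a v [ZMOD 2] := by
  obtain ⟨m, hm⟩ := hgp.heven u hu
  obtain ⟨n, hn⟩ := hgp.heven v hv
  unfold Int.ModEq
  omega

lemma qj_lt (hgp : GoodParam p q r t a) {j : ℕ} (hj : LeastJ p r a j) : qj q r a j < a j := by
  obtain ⟨hj1, hjr, -, hmin⟩ := hj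
  have hsplit := sum_Icc_one_eq_add_add a hj1 hjr
  have hlt := hmin (j - 1) (by omega)
  have hpos := hgp.hpos j (mem_Icc.mpr ⟨hj1, hjr⟩)
  have := hgp.hsum
  unfold qj
  omega

lemma qj_eq_zero_of_le_pj (hgp : GoodParam p q r t a) {j : ℕ} (hj : LeastJ p r a j)
    (h : a j ≤ pj p a j) : qj q r a j = 0 := by
  have hsplit := sum_Icc_one_eq_add_add a hj.h1 hj.hle
  have hpos := hgp.hpos j (mem_Icc.mpr ⟨hj.h1, hj.hle⟩)
  have := hgp.hsum
  unfold pj at h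
  unfold qj
  omega

lemma le_two_mul_of_mem_nuLt_of_mem_nuGt (hgp : GoodParam p q r t a) {j : ℕ}
    (hj : LeastJ p r a j)
    (hcard : Multiset.card ((nu t a j).filter (fun x => x ∈ nuLt t a j)) ≤ qj q r a j)
    (hmult : ∀ x : ℚ, Multiset.count x (nuAll t a r) ≤ 2)
    {x : ℚ} (hxl : x ∈ nuLt t a j) (hxg : x ∈ nuGt t a r j) : (t j : ℚ) + a j ≤ 2 * x := by
  have hjr := hj.hle
  have hjmem : j ∈ Icc 1 r := mem_Icc.mpr ⟨hj.h1, hjr⟩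
  obtain ⟨u, hu, hxu⟩ := mem_nuLt.mp hxl
  have hu' := mem_Icc.mp hu
  have humem : u ∈ Icc 1 r := mem_Icc.mpr ⟨hu'.1, by omega⟩
  by_contra! hhi
  rcases le_or_gt (2 * x) ((t j : ℚ) - a j) with hbelow | hlo
  · have hsub : nu t a j ⊆ nuLt t a j := fun y hy =>
      mem_nuLt.mpr ⟨u, hu, nu_subset_of_mem_below (hgp.modEq_two hjmem humem)
        (hgp.t_antitone hu'.1 (by omega) hjr) hxu hbelow hy⟩
    rw [Multiset.filter_eq_self.mpr hsub, card_nu] at hcard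
    exact (hgp.qj_lt hj).not_ge hcard
  · have hxj : x ∈ nu t a j := mem_nu_of_mem_nu (hgp.modEq_two humem hjmem) hxu hlo hhi
    have h3 := hmult x
    rw [nuAll_eq_add hj.h1 hjr, Multiset.count_add, Multiset.count_add] at h3
    have := Multiset.count_pos.mpr hxl
    have := Multiset.count_pos.mpr hxj
    have := Multiset.count_pos.mpr hxg
    omega

end GoodParam

end

theorem statement6_general (p q r j : ℕ) (t : ℕ → ℤ) (a : ℕ → ℕ)
    (hgp : GoodParam p q r t a) (hj : LeastJ p r a j)
    (hnv : NonVanishing p q r t a j)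
    (hmult : ∀ x : ℚ, Multiset.count x (nuAll t a r) ≤ 2)
    (hx : ∃ x : ℚ, x ∈ nuLt t a j ∧ x ∈ nuGt t a r j) :
    (∀ y ∈ nu t a j, y ∈ nuGt t a r j) ∧ qj q r a j = 0 ∧
    (∀ x : ℚ, x ∈ nuLt t a j → x ∈ nuGt t a r j →
      ((t j : ℚ) + (a j : ℚ) - 1) / 2 < x) := by
  obtain ⟨-, -, hcardLt, hcardGt⟩ := hnv
  have habove : ∀ {y : ℚ}, y ∈ nuLt t a j → y ∈ nuGt t a r j → (t j : ℚ) + a j ≤ 2 * y :=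
    hgp.le_two_mul_of_mem_nuLt_of_mem_nuGt hj hcardLt hmult
  obtain ⟨x, hxl, hxg⟩ := hx
  obtain ⟨v, hv, hxv⟩ := mem_nuGt.mp hxg
  have hv' := mem_Icc.mp hv
  have hsub : nu t a j ⊆ nuGt t a r j := fun y hy =>
    mem_nuGt.mpr ⟨v, hv, nu_subset_of_mem_above
      (hgp.modEq_two (mem_Icc.mpr ⟨hj.h1, hj.hle⟩) (mem_Icc.mpr ⟨by omega, hv'.2⟩))
      (hgp.t_antitone hj.h1 (by omega) hv'.2) hxv (habove hxl hxg) hy⟩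
  refine ⟨hsub, hgp.qj_eq_zero_of_le_pj hj ?_, fun y hyl hyg => by linarith [habove hyl hyg]⟩
  rwa [Multiset.filter_eq_self.mpr hsub, card_nu] at hcardGt

/-- if every rational occurs at most twice in `ν` and some rational occurs
both in `ν_{<j}` and in `ν_{>j}`, then `ν_j ⊆ ν_{>j}`, `q_j = 0`, and every rational
common to `ν_{<j}` and `ν_{>j}` is strictly greater than `max ν_j = (t_j + a_j − 1)/2`. -/
theorem statement6 (p q r j : ℕ) (hp : 1 ≤ p) (t : ℕ → ℤ) (a : ℕ → ℕ)
    (hgp : GoodParam p q r t a) (hj : LeastJ p r a j)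
    (hnv : NonVanishing p q r t a j)
    (hmult : ∀ x : ℚ, Multiset.count x (nuAll t a r) ≤ 2)
    (hx : ∃ x : ℚ, x ∈ nuLt t a j ∧ x ∈ nuGt t a r j) :
    (∀ y ∈ nu t a j, y ∈ nuGt t a r j) ∧ qj q r a j = 0 ∧
    (∀ x : ℚ, x ∈ nuLt t a j → x ∈ nuGt t a r j →
      ((t j : ℚ) + (a j : ℚ) - 1) / 2 < x) :=
  statement6_general p q r j t a hgp hj hnv hmult hx
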